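/- arXiv:0802.0892 — 2 statements merged into one kernel-verified Lean document; each statement's English description precedes it below -/
import Mathlib

section
/- Let ω be any modulus of continuity and let f ∈ A(𝔻) satisfy the boundary little-o condition: for every ε > 0 there is δ > 0 with |f(ξ)−f(ζ)| ≤ ε·ω(|ξ−ζ|) whenever ξ,ζ ∈ 𝕋 and |ξ−ζ| ≤ δ. Then |f(z) − f(ζ)| = o(ω(|z−ζ|)) as |z−ζ| → 0 with z ∈ 𝔻 and ζ ∈ 𝕋: for every ε > 0 there is δ > 0 such that |f(z) − f(ζ)| ≤ ε·ω(|z−ζ|) for all z ∈ 𝔻 and ζ ∈ 𝕋 with |z−ζ| ≤ δ. -/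
open Complex MeasureTheory Metric Set Filter Topology

noncomputable section

/-- The open unit disk in `ℂ`. -/
def oDisk : Set ℂ := Metric.ball 0 1

/-- The closed unit disk in `ℂ`. -/
def cDisk : Set ℂ := Metric.closedBall 0 1

/-- The unit circle in `ℂ`. -/
def uCircle : Set ℂ := Metric.sphere 0 1

/-- A modulus of continuity: continuous nondecreasing on `[0,2]`, `ω 0 = 0`,
`t ↦ ω t / t` nonincreasing on `(0,2]` and tending to `∞` as `t → 0⁺`. -/
structure IsModulus (ω : ℝ → ℝ) : Prop where
  contOn : ContinuousOn ω (Icc 0 2)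
  monoOn : MonotoneOn ω (Icc 0 2)
  zero : ω 0 = 0
  antiOn : AntitoneOn (fun t => ω t / t) (Ioc 0 2)
  blowup : Tendsto (fun t => ω t / t) (nhdsWithin 0 (Ioi 0)) atTop

/-- Membership in the disk algebra `A(𝔻)`: continuous on the closed disk,
holomorphic on the open disk. -/
def MemDiskAlg (f : ℂ → ℂ) : Prop :=
  ContinuousOn f cDisk ∧ DifferentiableOn ℂ f oDisk

/-- Membership in `Λ_ω`: the disk algebra together with the little-o Lipschitz
condition `|f z - f w| = o(ω |z - w|)` on the closed disk. -/
def MemLambda (ω : ℝ → ℝ) (f : ℂ → ℂ) : Prop :=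
  MemDiskAlg f ∧ ∀ ε > 0, ∃ δ > 0, ∀ z ∈ cDisk, ∀ w ∈ cDisk,
    dist z w ≤ δ → ‖f z - f w‖ ≤ ε * ω (dist z w)

/-- The norm `‖f‖_ω = sup |f| + sup |f z - f w| / ω (|z - w|)` on `Λ_ω`. -/
def lambdaNorm (ω : ℝ → ℝ) (f : ℂ → ℂ) : ℝ :=
  (⨆ z : cDisk, ‖f (z : ℂ)‖) +
    ⨆ p : cDisk × cDisk, ‖f (p.1 : ℂ) - f (p.2 : ℂ)‖ / ω (dist (p.1 : ℂ) (p.2 : ℂ))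

/-- The norm `‖f‖_{Λ_ω(𝕋)} = sup_{closed disk} |f| + sup_{ξ≠ζ∈𝕋} |f ξ - f ζ| / ω (|ξ - ζ|)`. -/
def circleNorm (ω : ℝ → ℝ) (f : ℂ → ℂ) : ℝ :=
  (⨆ z : cDisk, ‖f (z : ℂ)‖) +
    ⨆ p : uCircle × uCircle, ‖f (p.1 : ℂ) - f (p.2 : ℂ)‖ / ω (dist (p.1 : ℂ) (p.2 : ℂ))

/-- A closed ideal of `Λ_ω`: contained in `Λ_ω`, closed under addition and under
multiplication by arbitrary elements of `Λ_ω`, and closed in the norm `‖·‖_ω`. -/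
def IsClosedIdeal (ω : ℝ → ℝ) (I : Set (ℂ → ℂ)) : Prop :=
  (∀ f ∈ I, MemLambda ω f) ∧
  (∀ f ∈ I, ∀ g ∈ I, (fun z => f z + g z) ∈ I) ∧
  (∀ f ∈ I, ∀ g : ℂ → ℂ, MemLambda ω g → (fun z => g z * f z) ∈ I) ∧
  (∀ f : ℂ → ℂ, MemLambda ω f →
    (∀ ε > 0, ∃ g ∈ I, lambdaNorm ω (fun z => f z - g z) ≤ ε) → f ∈ I)

/-- `E_I`: the common boundary zero set of a family `I` of functions. -/
def zeroSetI (I : Set (ℂ → ℂ)) : Set ℂ := {ξ | ξ ∈ uCircle ∧ ∀ f ∈ I, f ξ = 0}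

/-- An inner function: bounded by 1 and holomorphic on `𝔻`, with radial limits of
modulus 1 at almost every boundary point. -/
def IsInner (U : ℂ → ℂ) : Prop :=
  DifferentiableOn ℂ U oDisk ∧ (∀ z ∈ oDisk, ‖U z‖ ≤ 1) ∧
  ∀ᵐ (θ : ℝ) ∂volume, Tendsto (fun r : ℝ => ‖U ((r : ℂ) * Complex.exp (θ * Complex.I))‖)
    (nhdsWithin 1 (Iio 1)) (nhds 1)

/-- `U` divides `f` (i.e. `f / U ∈ H^∞`): `f = U·h` on `𝔻` for a bounded
holomorphic `h`. -/
def InnerDivides (U f : ℂ → ℂ) : Prop :=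
  ∃ h : ℂ → ℂ, DifferentiableOn ℂ h oDisk ∧ (∃ C : ℝ, ∀ z ∈ oDisk, ‖h z‖ ≤ C) ∧
    ∀ z ∈ oDisk, f z = U z * h z

/-- Condition (1.1): for every `ρ ∈ [1,2]` there is `η_ρ > 0` with
`ω (t^ρ) ≥ η_ρ · (ω t)^ρ` for all `t ∈ [0,2]`. -/
def Cond11 (ω : ℝ → ℝ) : Prop :=
  ∀ ρ ∈ Icc (1 : ℝ) 2, ∃ η > 0, ∀ t ∈ Icc (0 : ℝ) 2, η * ω t ^ ρ ≤ ω (t ^ ρ)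

/-- Condition (2): there is `η₂ > 0` with `ω (t²) ≥ η₂ · (ω t)²` for `t ∈ [0,2]`. -/
def Cond2 (ω : ℝ → ℝ) : Prop :=
  ∃ η > 0, ∀ t ∈ Icc (0 : ℝ) 2, η * ω t ^ 2 ≤ ω (t ^ 2)

/-- Condition (3): there is `η > 0` with `ω (t²) ≥ η · ω t` for `t ∈ [0,2]`. -/
def Cond3 (ω : ℝ → ℝ) : Prop :=
  ∃ η > 0, ∀ t ∈ Icc (0 : ℝ) 2, η * ω t ≤ ω (t ^ 2)

/-- The point `e^{iθ}` of the unit circle. -/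
def cirPt (θ : ℝ) : ℂ := Complex.exp (θ * Complex.I)

/-- `θ ↦ log |f (e^{iθ})|`. -/
def logAbs (f : ℂ → ℂ) (θ : ℝ) : ℝ := Real.log ‖f (cirPt θ)‖

/-- Integrability of `θ ↦ log |f (e^{iθ})|` on `[0, 2π]`. -/
def LogIntegrable (f : ℂ → ℂ) : Prop :=
  IntervalIntegrable (logAbs f) volume 0 (2 * Real.pi)

/-- The outer function `O_f` of `f`. -/
def outerFn (f : ℂ → ℂ) (z : ℂ) : ℂ :=
  Complex.exp ((2 * (Real.pi : ℂ))⁻¹ * ∫ θ in (0 : ℝ)..(2 * Real.pi),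
    ((cirPt θ + z) / (cirPt θ - z)) * (logAbs f θ : ℂ))

/-- The power `O_f^s` of the outer function of `f`, for real `s`. -/
def outerPow (f : ℂ → ℂ) (s : ℝ) (z : ℂ) : ℂ :=
  Complex.exp ((s : ℂ) * ((2 * (Real.pi : ℂ))⁻¹ * ∫ θ in (0 : ℝ)..(2 * Real.pi),
    ((cirPt θ + z) / (cirPt θ - z)) * (logAbs f θ : ℂ)))

/-- `f` is outer: `f = c · O_f` on `𝔻` for a unimodular constant `c`. -/
def IsOuter (f : ℂ → ℂ) : Prop :=
  ∃ c : ℂ, ‖c‖ = 1 ∧ ∀ z ∈ oDisk, f z = c * outerFn f z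

/-- The partial outer function `f_Γ` of `f` associated with a subset `Γ` of the circle. -/
def outerOn (f : ℂ → ℂ) (Γ : Set ℂ) (z : ℂ) : ℂ :=
  Complex.exp ((2 * (Real.pi : ℂ))⁻¹ *
    ∫ θ in {θ : ℝ | θ ∈ Ico 0 (2 * Real.pi) ∧ cirPt θ ∈ Γ},
      ((cirPt θ + z) / (cirPt θ - z)) * (logAbs f θ : ℂ))

/-- The singular function `S_μ` of a (finite positive Borel) measure `μ` on the circle. -/
def sMu (μ : Measure ℂ) (z : ℂ) : ℂ :=
  Complex.exp (-(2 * (Real.pi : ℂ))⁻¹ * ∫ ξ, (ξ + z) / (ξ - z) ∂μ)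

/-- Arclength measure on the unit circle, as a measure on `ℂ`. -/
def arcMeasure : Measure ℂ :=
  Measure.map cirPt (volume.restrict (Ico 0 (2 * Real.pi)))

/-- The (closed) support of a measure on `ℂ`. -/
def mSupport (μ : Measure ℂ) : Set ℂ := {x | ∀ ε > 0, 0 < μ (Metric.ball x ε)}

/-- `E_f`: the boundary zero set of `f`. -/
def bZeroSet (f : ℂ → ℂ) : Set ℂ := {ξ | ξ ∈ uCircle ∧ f ξ = 0}

/-- `Z_f`: the zero set of `f` in the closed disk. -/
def zSet (f : ℂ → ℂ) : Set ℂ := {z | z ∈ cDisk ∧ f z = 0}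

/-- A modulus of continuity extended to `[0,∞)` by the value `ω 2` beyond `2`. -/
def omegaExt (ω : ℝ → ℝ) (t : ℝ) : ℝ := if t ≤ 2 then ω t else ω 2

/-- The quantity `a_U(ζ)` associated to an inner function with zeros `a n` and
singular measure `μ`. -/
def aU {ι : Type*} (a : ι → ℂ) (μ : Measure ℂ) (ζ : ℂ) : ℝ :=
  (∑' n, (1 - ‖a n‖ ^ 2) / ‖ζ - a n‖ ^ 2) +
    (Real.pi)⁻¹ * ∫ x, (‖x - ζ‖ ^ 2)⁻¹ ∂μ

end

/-
On the boundary, the little-o condition together with boundedness of `f` gives, for fixed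
`ζ ∈ 𝕋` and a scale `d`, the majorant `|f ξ - f ζ| ≤ a + l |ξ - ζ|` with `a = ε ω(d)` and
`l = ε ω(d)/d + C`, because `ω(t)/t` is nonincreasing. The function
`Φ w = 2 (a + l (1 - ζ̄ w))` is holomorphic, has nonnegative real part on the disk and dominates
that majorant on `𝕋`, so the maximum principle applied to `(f - f ζ)/Φ` gives
`|f z - f ζ| ≤ 2 (a + l |z - ζ|)` on the disk. At `d = |z - ζ|` this is `O(ε ω(d)) + 2 C d`, and
`C d = o(ω(d))` because `ω(t)/t → ∞`.
-/

open Complex Metric Set Filter Topology ComplexConjugate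

namespace IsModulus

variable {ω : ℝ → ℝ}

lemma nonneg (hω : IsModulus ω) {t : ℝ} (ht₀ : 0 ≤ t) (ht₂ : t ≤ 2) : 0 ≤ ω t :=
  hω.zero ▸ hω.monoOn ⟨le_rfl, zero_le_two⟩ ⟨ht₀, ht₂⟩ ht₀

lemma exists_mul_le (hω : IsModulus ω) (K : ℝ) :
    ∃ δ > 0, ∀ d, 0 < d → d ≤ δ → K * d ≤ ω d := by
  obtain ⟨δ, hδ, hK⟩ := Metric.eventually_nhds_iff.mp
    (eventually_nhdsWithin_iff.mp (hω.blowup.eventually_ge_atTop K))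
  refine ⟨δ / 2, half_pos hδ, fun d hd₀ hd => ?_⟩
  have hdist : dist d 0 < δ := by rw [Real.dist_0_eq_abs, abs_of_pos hd₀]; linarith
  exact (le_div_iff₀ hd₀).mp (hK hdist hd₀)

lemma pos (hω : IsModulus ω) {t : ℝ} (ht₀ : 0 < t) (ht₂ : t ≤ 2) : 0 < ω t := by
  obtain ⟨δ, hδ, hle⟩ := hω.exists_mul_le 1
  have hs : 0 < min δ t := lt_min hδ ht₀
  calc 0 < 1 * min δ t := by positivity
    _ ≤ ω (min δ t) := hle _ hs (min_le_left _ _)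
    _ ≤ ω t := hω.monoOn ⟨hs.le, (min_le_right _ _).trans ht₂⟩ ⟨ht₀.le, ht₂⟩ (min_le_right _ _)

/-- Below `d` use monotonicity of `ω`, above `d` that of `ω t / t`. -/
lemma le_add_div_mul (hω : IsModulus ω) {d t : ℝ} (hd₀ : 0 < d) (hd₂ : d ≤ 2)
    (ht₀ : 0 ≤ t) (ht₂ : t ≤ 2) : ω t ≤ ω d + ω d / d * t := by
  have hωd : 0 ≤ ω d := hω.nonneg hd₀.le hd₂
  rcases le_or_gt t d with htd | hdt
  · have : ω t ≤ ω d := hω.monoOn ⟨ht₀, ht₂⟩ ⟨hd₀.le, hd₂⟩ htd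
    linarith [mul_nonneg (div_nonneg hωd hd₀.le) ht₀]
  · have ht : 0 < t := hd₀.trans hdt
    have hratio : ω t / t ≤ ω d / d := hω.antiOn ⟨hd₀, hd₂⟩ ⟨ht, ht₂⟩ hdt.le
    have : ω t ≤ ω d / d * t := (div_le_iff₀ ht).mp hratio
    linarith

end IsModulus

lemma dist_le_two_of_mem_cDisk {z w : ℂ} (hz : z ∈ cDisk) (hw : w ∈ cDisk) : dist z w ≤ 2 :=
  (dist_triangle_right z w 0).trans (by
    simp only [cDisk, mem_closedBall] at hz hw
    linarith)

lemma norm_one_sub_conj_mul {ζ : ℂ} (hζ : ζ ∈ uCircle) (w : ℂ) :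
    ‖1 - conj ζ * w‖ = dist w ζ := by
  have hζ1 : ‖ζ‖ = 1 := by simpa [uCircle] using hζ
  have hunit : conj ζ * ζ = 1 := by rw [conj_mul', hζ1]; norm_num
  rw [show 1 - conj ζ * w = conj ζ * (ζ - w) by rw [mul_sub, hunit], norm_mul,
    RCLike.norm_conj, hζ1, one_mul, dist_comm, dist_eq_norm]

lemma re_one_sub_conj_mul_nonneg {ζ : ℂ} (hζ : ζ ∈ uCircle) {w : ℂ} (hw : w ∈ cDisk) :
    0 ≤ (1 - conj ζ * w).re := by
  have hζ1 : ‖ζ‖ = 1 := by simpa [uCircle] using hζ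
  have hw1 : ‖w‖ ≤ 1 := by simpa [cDisk] using hw
  have : (conj ζ * w).re ≤ 1 :=
    (re_le_norm _).trans (by rw [norm_mul, RCLike.norm_conj, hζ1, one_mul]; exact hw1)
  rw [sub_re, one_re]
  linarith

lemma add_mul_norm_le_two_mul_norm {a l : ℝ} (ha : 0 ≤ a) (hl : 0 ≤ l) {v : ℂ}
    (hv : 0 ≤ v.re) : a + l * ‖v‖ ≤ 2 * ‖(a : ℂ) + l * v‖ := by
  have hsq : ‖(a : ℂ) + l * v‖ ^ 2 = a ^ 2 + 2 * a * l * v.re + l ^ 2 * ‖v‖ ^ 2 := by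
    rw [Complex.sq_norm, Complex.sq_norm, normSq_apply, normSq_apply]
    simp only [add_re, ofReal_re, mul_re, ofReal_im, zero_mul, sub_zero, add_im, mul_im,
      add_zero, zero_add]
    ring
  refine (pow_le_pow_iff_left₀ (by positivity) (by positivity) two_ne_zero).mp ?_
  rw [mul_pow, hsq]
  nlinarith [sq_nonneg (a - l * ‖v‖), mul_nonneg (mul_nonneg ha hl) hv]

/-- Maximum principle for a quotient `F / Φ` by a nonvanishing `Φ`. -/
lemma norm_le_norm_of_forall_mem_frontier {U : Set ℂ} (hU : Bornology.IsBounded U)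
    {F Φ : ℂ → ℂ} (hF : DiffContOnCl ℂ F U) (hΦ : DiffContOnCl ℂ Φ U)
    (hΦ₀ : ∀ z ∈ closure U, Φ z ≠ 0) (hle : ∀ z ∈ frontier U, ‖F z‖ ≤ ‖Φ z‖)
    {z : ℂ} (hz : z ∈ closure U) : ‖F z‖ ≤ ‖Φ z‖ := by
  have hquot : ‖(Φ z)⁻¹ • F z‖ ≤ 1 :=
    norm_le_of_forall_mem_frontier_norm_le hU ((hΦ.inv hΦ₀).smul hF) (fun w hw => by
      rw [Pi.inv_apply, norm_smul, norm_inv, inv_mul_le_one₀ (norm_pos_iff.mpr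
        (hΦ₀ w (frontier_subset_closure hw)))]
      exact hle w hw) hz
  rwa [norm_smul, norm_inv, inv_mul_le_one₀ (norm_pos_iff.mpr (hΦ₀ z hz))] at hquot

lemma norm_sub_le_of_forall_uCircle {f : ℂ → ℂ} (hf : MemDiskAlg f) {ζ : ℂ} (hζ : ζ ∈ uCircle)
    {a l : ℝ} (ha : 0 < a) (hl : 0 ≤ l)
    (hbd : ∀ ξ ∈ uCircle, ‖f ξ - f ζ‖ ≤ a + l * dist ξ ζ) {z : ℂ} (hz : z ∈ cDisk) :
    ‖f z - f ζ‖ ≤ 2 * (a + l * dist z ζ) := by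
  set Φ : ℂ → ℂ := fun w => 2 * ((a : ℂ) + l * (1 - conj ζ * w)) with hΦ
  have hclosure : closure (ball (0 : ℂ) 1) = cDisk := closure_ball 0 one_ne_zero
  have hΦ_lower : ∀ w ∈ cDisk, a + l * dist w ζ ≤ ‖Φ w‖ := fun w hw => by
    rw [hΦ, norm_mul, Complex.norm_two, ← norm_one_sub_conj_mul hζ w]
    exact add_mul_norm_le_two_mul_norm ha.le hl (re_one_sub_conj_mul_nonneg hζ hw)
  have hΦ_ne : ∀ w ∈ closure (ball (0 : ℂ) 1), Φ w ≠ 0 := fun w hw => by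
    rw [hclosure] at hw
    exact norm_pos_iff.mp ((add_pos_of_pos_of_nonneg ha (by positivity)).trans_le
      (hΦ_lower w hw))
  have hΦ_diff : Differentiable ℂ Φ := by fun_prop
  have hmax : ‖f z - f ζ‖ ≤ ‖Φ z‖ :=
    norm_le_norm_of_forall_mem_frontier isBounded_ball
      ((DiffContOnCl.mk_ball hf.2 hf.1).sub_const _) hΦ_diff.diffContOnCl hΦ_ne
      (fun ξ hξ => by
        rw [frontier_ball 0 one_ne_zero] at hξ
        exact (hbd ξ hξ).trans (hΦ_lower ξ (sphere_subset_closedBall hξ)))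
      (hclosure ▸ hz)
  calc ‖f z - f ζ‖ ≤ ‖Φ z‖ := hmax
    _ ≤ 2 * (‖(a : ℂ)‖ + ‖(l : ℂ)‖ * ‖1 - conj ζ * z‖) := by
      rw [hΦ, norm_mul, Complex.norm_two, ← norm_mul]
      gcongr
      exact norm_add_le _ _
    _ = 2 * (a + l * dist z ζ) := by
      rw [norm_real, norm_real, Real.norm_of_nonneg ha.le, Real.norm_of_nonneg hl,
        norm_one_sub_conj_mul hζ]

/-- Far apart, the boundedness of `f` is turned into the Lipschitz term `C * dist ξ ζ`. -/
lemma exists_norm_sub_le_modulus_add_mul_dist {ω : ℝ → ℝ} (hω : IsModulus ω) {f : ℂ → ℂ}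
    (hf : ContinuousOn f uCircle) {ε δ : ℝ} (hε : 0 ≤ ε) (hδ : 0 < δ)
    (hb : ∀ ξ ∈ uCircle, ∀ ζ ∈ uCircle, dist ξ ζ ≤ δ → ‖f ξ - f ζ‖ ≤ ε * ω (dist ξ ζ)) :
    ∃ C ≥ 0, ∀ ξ ∈ uCircle, ∀ ζ ∈ uCircle,
      ‖f ξ - f ζ‖ ≤ ε * ω (dist ξ ζ) + C * dist ξ ζ := by
  obtain ⟨M, hM⟩ := (isCompact_sphere (0 : ℂ) 1).exists_bound_of_continuousOn hf
  refine ⟨2 * max M 0 / δ, by positivity, fun ξ hξ ζ hζ => ?_⟩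
  have hdist₂ : dist ξ ζ ≤ 2 :=
    dist_le_two_of_mem_cDisk (sphere_subset_closedBall hξ) (sphere_subset_closedBall hζ)
  have hmod : 0 ≤ ε * ω (dist ξ ζ) := mul_nonneg hε (hω.nonneg dist_nonneg hdist₂)
  rcases le_or_gt (dist ξ ζ) δ with hnear | hfar
  · have : 0 ≤ 2 * max M 0 / δ * dist ξ ζ := by positivity
    linarith [hb ξ hξ ζ hζ hnear]
  · have hbound : ‖f ξ - f ζ‖ ≤ 2 * max M 0 := by
      linarith [norm_sub_le (f ξ) (f ζ), (hM ξ hξ).trans (le_max_left M 0),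
        (hM ζ hζ).trans (le_max_left M 0)]
    have : 2 * max M 0 ≤ 2 * max M 0 / δ * dist ξ ζ := by
      rw [div_mul_eq_mul_div, le_div_iff₀ hδ]
      gcongr
    linarith

/-- **Lemma A.2**: for any modulus of continuity `ω` and `f ∈ A(𝔻)` satisfying the
boundary little-o condition, one has `|f(z) − f(ζ)| = o(ω(|z−ζ|))` as
`|z−ζ| → 0` with `z ∈ 𝔻` and `ζ ∈ 𝕋`. -/
theorem little_o_disk_to_boundary (ω : ℝ → ℝ) (hω : IsModulus ω)
    (f : ℂ → ℂ) (hf : MemDiskAlg f)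
    (hb : ∀ ε > 0, ∃ δ > 0, ∀ ξ ∈ uCircle, ∀ ζ ∈ uCircle,
      dist ξ ζ ≤ δ → ‖f ξ - f ζ‖ ≤ ε * ω (dist ξ ζ)) :
    ∀ ε > 0, ∃ δ > 0, ∀ z ∈ oDisk, ∀ ζ ∈ uCircle,
      dist z ζ ≤ δ → ‖f z - f ζ‖ ≤ ε * ω (dist z ζ) := by
  intro ε hε
  obtain ⟨δ₀, hδ₀, hnear⟩ := hb (ε / 6) (by positivity)
  obtain ⟨C, hC, hmajor⟩ := exists_norm_sub_le_modulus_add_mul_dist hω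
    (hf.1.mono sphere_subset_closedBall) (by positivity) hδ₀ hnear
  obtain ⟨δ, hδ, hlittle⟩ := hω.exists_mul_le (6 * C / ε)
  refine ⟨min δ 2, by positivity, fun z hz ζ hζ hzζ => ?_⟩
  set d := dist z ζ
  have hd₀ : 0 < d := dist_pos.mpr fun h => by
    simp only [oDisk, uCircle, mem_ball_zero_iff, mem_sphere_zero_iff_norm, h] at hz hζ
    linarith
  have hd₂ : d ≤ 2 := hzζ.trans (min_le_right _ _)
  have hωd : 0 < ω d := hω.pos hd₀ hd₂
  have hCd : 6 * C / ε * d ≤ ω d := hlittle d hd₀ (hzζ.trans (min_le_left _ _))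
  have hbd : ∀ ξ ∈ uCircle, ‖f ξ - f ζ‖ ≤ ε / 6 * ω d + (ε / 6 * ω d / d + C) * dist ξ ζ :=
    fun ξ hξ => (hmajor ξ hξ ζ hζ).trans <| by
      have := hω.le_add_div_mul hd₀ hd₂ dist_nonneg
        (dist_le_two_of_mem_cDisk (sphere_subset_closedBall hξ) (sphere_subset_closedBall hζ))
      rw [mul_div_assoc]
      nlinarith
  have hdisk := norm_sub_le_of_forall_uCircle hf hζ (by positivity)
    (by positivity) hbd (ball_subset_closedBall hz)
  calc ‖f z - f ζ‖ ≤ 2 * (ε / 6 * ω d + (ε / 6 * ω d / d + C) * d) := hdisk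
    _ = 2 / 3 * ε * ω d + 6 * C / ε * d * (ε / 3) := by field_simp; ring
    _ ≤ ε * ω d := by nlinarith
end

section
/- Let ξ ∈ 𝕋 and 0 < ρ < 1. Let (a_n) be a (finite or infinite) sequence in 𝔻 with ∑_n (1−|a_n|) < ∞ and suppose 1−ρ ≤ |ξ − a_n| for every n. Let μ be a finite positive Borel measure on 𝕋 with 1−ρ ≤ d(ξ, supp μ). Then (∏_n |(ρξ − a_n)/(1 − conj(a_n)·ρξ)|) · |S_μ(ρξ)| ≤ exp(−((1−ρ)/8)·a(ξ)), where a(ξ) := ∑_n (1−|a_n|²)/|ξ − a_n|² + (1/π)∫_𝕋 |e^{iθ} − ξ|^{−2} dμ(θ). (This is the estimate |U_f(ρξ)| ≤ exp(−((1−ρ)/8)·a_f(ξ)) for an inner function with zeros (a_n) and singular measure μ, under the hypothesis 1−ρ ≤ d(ξ, Z_f).) -/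
open Complex MeasureTheory Metric Set Filter Topology

open Complex MeasureTheory Metric Set Filter Topology
open scoped ComplexConjugate

/-! Put `z = ρξ`. A Blaschke factor satisfies
`|(z - a)/(1 - ā z)|² = 1 - (1 - |a|²)(1 - |z|²)/|1 - ā z|² ≤ exp (-(1 - |a|²)(1 - |z|²)/|1 - ā z|²)`,
and `|S_μ(z)| = exp (-(1/2π) ∫ (1 - |z|²)/|x - z|² dμ(x))` by the Poisson formula for the real part
of the Herglotz kernel. In both cases the denominator is at most `|ξ - w| + (1 - ρ) ≤ 2|ξ - w|`,
where `w` is the zero or the point of the support, since `|ξ - w| ≥ 1 - ρ`. Together with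
`1 - |z|² ≥ 1 - ρ` this bounds every factor by `exp (-((1 - ρ)/8) · (its term of a(ξ)))`. -/

section Products

variable {ι : Type*}

theorem Real.multipliable_of_nonneg_of_le_one {f : ι → ℝ} (hf0 : ∀ i, 0 ≤ f i)
    (hf1 : ∀ i, f i ≤ 1) : Multipliable f :=
  ⟨_, tendsto_atTop_ciInf (Finset.prod_anti_set_of_le_one hf0 hf1)
    ⟨0, by rintro _ ⟨s, rfl⟩; exact Finset.prod_nonneg fun i _ => hf0 i⟩⟩

theorem Real.tprod_le_exp_neg_tsum {f g : ι → ℝ} (hf0 : ∀ i, 0 ≤ f i)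
    (hfg : ∀ i, f i ≤ Real.exp (-g i)) (hg0 : ∀ i, 0 ≤ g i) (hg : Summable g) :
    ∏' i, f i ≤ Real.exp (-∑' i, g i) := by
  have hf1 : ∀ i, f i ≤ 1 := fun i => (hfg i).trans (Real.exp_le_one_iff.2 (neg_nonpos.2 (hg0 i)))
  refine le_of_tendsto_of_tendsto' (Real.multipliable_of_nonneg_of_le_one hf0 hf1).hasProd
    ((Real.continuous_exp.tendsto _).comp hg.hasSum.neg) fun s => ?_
  calc ∏ i ∈ s, f i ≤ ∏ i ∈ s, Real.exp (-g i) :=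
        Finset.prod_le_prod (fun i _ => hf0 i) fun i _ => hfg i
    _ = Real.exp (∑ i ∈ s, -g i) := (Real.exp_sum _ _).symm

end Products

theorem Complex.normSq_one_sub_conj_mul_sub_normSq_sub (a z : ℂ) :
    normSq (1 - conj a * z) - normSq (z - a) = (1 - normSq a) * (1 - normSq z) := by
  simp only [normSq_apply, sub_re, sub_im, mul_re, mul_im, one_re, one_im, conj_re, conj_im]
  ring

theorem Complex.norm_blaschke_sq {a z : ℂ} (h : 1 - conj a * z ≠ 0) :
    ‖(z - a) / (1 - conj a * z)‖ ^ 2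
      = 1 - (1 - ‖a‖ ^ 2) * (1 - ‖z‖ ^ 2) / ‖1 - conj a * z‖ ^ 2 := by
  have hD : normSq (1 - conj a * z) ≠ 0 := normSq_eq_zero.not.2 h
  simp only [norm_div, div_pow, Complex.sq_norm]
  rw [← normSq_one_sub_conj_mul_sub_normSq_sub, sub_div, div_self hD, sub_sub_cancel]

theorem Complex.norm_blaschke_le_exp {a z : ℂ} (h : 1 - conj a * z ≠ 0) :
    ‖(z - a) / (1 - conj a * z)‖
      ≤ Real.exp (-((1 - ‖a‖ ^ 2) * (1 - ‖z‖ ^ 2) / ‖1 - conj a * z‖ ^ 2 / 2)) := by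
  refine (pow_le_pow_iff_left₀ (norm_nonneg _) (Real.exp_pos _).le two_ne_zero).1 ?_
  rw [norm_blaschke_sq h, ← Real.exp_nat_mul]
  refine le_of_eq_of_le ?_ (Real.add_one_le_exp _)
  push_cast
  ring

theorem Complex.norm_one_sub_conj_mul_eq_norm_sub {w ξ : ℂ} (hξ : ‖ξ‖ = 1) :
    ‖1 - conj w * ξ‖ = ‖ξ - w‖ := by
  have h : 1 - conj w * ξ = ξ * conj (ξ - w) := by
    rw [map_sub, mul_sub, mul_conj', hξ]
    push_cast
    ring
  rw [h, norm_mul, norm_conj, hξ, one_mul]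

theorem Complex.norm_one_sub_conj_mul_ofReal_mul_le {w ξ : ℂ} (hξ : ‖ξ‖ = 1) {ρ : ℝ}
    (hρ : ρ ≤ 1) : ‖1 - conj w * (ρ * ξ)‖ ≤ ‖ξ - w‖ + (1 - ρ) * ‖w‖ := by
  have h : 1 - conj w * (ρ * ξ) = (1 - conj w * ξ) + ((1 - ρ : ℝ) : ℂ) * (conj w * ξ) := by
    push_cast
    ring
  rw [h, ← norm_one_sub_conj_mul_eq_norm_sub hξ]
  refine (norm_add_le _ _).trans_eq ?_
  rw [norm_mul, norm_mul, norm_real, Real.norm_of_nonneg (sub_nonneg.2 hρ), norm_conj, hξ,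
    mul_one]

theorem Complex.norm_sub_ofReal_mul_le {x ξ : ℂ} (hξ : ‖ξ‖ = 1) {ρ : ℝ} (hρ : ρ ≤ 1) :
    ‖x - ρ * ξ‖ ≤ ‖x - ξ‖ + (1 - ρ) := by
  have h : x - ρ * ξ = (x - ξ) + ((1 - ρ : ℝ) : ℂ) * ξ := by
    push_cast
    ring
  rw [h]
  refine (norm_add_le _ _).trans_eq ?_
  rw [norm_mul, norm_real, Real.norm_of_nonneg (sub_nonneg.2 hρ), hξ, mul_one]

theorem radial_kernel_comparison {ρ d D : ℝ} (hρ0 : 0 ≤ ρ) (hρ1 : ρ < 1) (hd : 1 - ρ ≤ d)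
    (hD0 : 0 < D) (hD : D ≤ d + (1 - ρ)) : (1 - ρ) / 8 / d ^ 2 ≤ (1 - ρ ^ 2) / D ^ 2 / 2 := by
  have hd0 : 0 < d := by linarith
  have hDd : D ^ 2 ≤ 4 * d ^ 2 := by nlinarith
  rw [div_div, div_div, div_le_div_iff₀ (by positivity) (by positivity)]
  nlinarith [mul_le_mul_of_nonneg_left hDd (sub_nonneg.2 hρ1.le),
    mul_nonneg (mul_nonneg hρ0 (sub_nonneg.2 hρ1.le)) (sq_nonneg d)]

theorem Complex.norm_blaschke_ofReal_mul_le_exp {a ξ : ℂ} {ρ : ℝ} (ha : ‖a‖ < 1) (hξ : ‖ξ‖ = 1)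
    (hρ0 : 0 ≤ ρ) (hρ1 : ρ < 1) (hfar : 1 - ρ ≤ ‖ξ - a‖) :
    ‖(ρ * ξ - a) / (1 - conj a * (ρ * ξ))‖
      ≤ Real.exp (-((1 - ρ) / 8 * ((1 - ‖a‖ ^ 2) / ‖ξ - a‖ ^ 2))) := by
  have hz : ‖(ρ : ℂ) * ξ‖ = ρ := by rw [norm_mul, norm_real, Real.norm_of_nonneg hρ0, hξ, mul_one]
  have hD0 : 0 < ‖1 - conj a * (ρ * ξ)‖ := by
    have hlt : ‖conj a * (ρ * ξ)‖ < 1 := by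
      rw [norm_mul, norm_conj, hz]
      nlinarith [norm_nonneg a]
    exact norm_pos_iff.2 (sub_ne_zero.2 fun h => by simp [← h] at hlt)
  have hD : ‖1 - conj a * (ρ * ξ)‖ ≤ ‖ξ - a‖ + (1 - ρ) :=
    (norm_one_sub_conj_mul_ofReal_mul_le hξ hρ1.le).trans
      (by nlinarith [norm_nonneg a])
  have hk := radial_kernel_comparison hρ0 hρ1 hfar hD0 hD
  have ha2 : 0 ≤ 1 - ‖a‖ ^ 2 := by nlinarith [norm_nonneg a]
  refine (norm_blaschke_le_exp (norm_pos_iff.1 hD0)).trans (Real.exp_le_exp.2 (neg_le_neg ?_))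
  rw [hz]
  calc (1 - ρ) / 8 * ((1 - ‖a‖ ^ 2) / ‖ξ - a‖ ^ 2)
      = (1 - ‖a‖ ^ 2) * ((1 - ρ) / 8 / ‖ξ - a‖ ^ 2) := by ring
    _ ≤ (1 - ‖a‖ ^ 2) * ((1 - ρ ^ 2) / ‖1 - conj a * (ρ * ξ)‖ ^ 2 / 2) :=
        mul_le_mul_of_nonneg_left hk ha2
    _ = _ := by ring

theorem summable_one_sub_norm_sq_div_norm_sub_sq {ι : Type*} {a : ι → ℂ} {ξ : ℂ} {δ : ℝ}
    (hδ : 0 < δ) (ha : ∀ n, ‖a n‖ ≤ 1) (hsum : Summable fun n => 1 - ‖a n‖)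
    (hfar : ∀ n, δ ≤ ‖ξ - a n‖) : Summable fun n => (1 - ‖a n‖ ^ 2) / ‖ξ - a n‖ ^ 2 := by
  refine Summable.of_nonneg_of_le (fun n => ?_) (fun n => ?_) (hsum.mul_left (2 / δ ^ 2))
  · exact div_nonneg (by nlinarith [ha n, norm_nonneg (a n)]) (sq_nonneg _)
  · rw [div_mul_eq_mul_div]
    exact div_le_div₀ (by nlinarith [ha n]) (by nlinarith [ha n, norm_nonneg (a n)])
      (by positivity) (pow_le_pow_left₀ hδ.le (hfar n) 2)

theorem mSupport_eq_support (μ : Measure ℂ) : mSupport μ = μ.support := by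
  ext x
  exact nhds_basis_ball.mem_measureSupport.symm

theorem ae_mem_mSupport (μ : Measure ℂ) : ∀ᵐ x ∂μ, x ∈ mSupport μ := by
  rw [mSupport_eq_support]
  exact Measure.support_mem_ae

theorem Complex.re_add_div_sub (x z : ℂ) :
    ((x + z) / (x - z)).re = (‖x‖ ^ 2 - ‖z‖ ^ 2) / ‖x - z‖ ^ 2 := by
  rw [div_re, ← add_div, ← normSq_eq_norm_sq, ← normSq_eq_norm_sq, ← normSq_eq_norm_sq]
  congr 1
  simp only [normSq_apply, add_re, add_im, sub_re, sub_im]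
  ring

theorem norm_sMu {μ : Measure ℂ} {z : ℂ} (hF : Integrable (fun x => (x + z) / (x - z)) μ) :
    ‖sMu μ z‖ = Real.exp (-((2 * Real.pi)⁻¹ * ∫ x, ((x + z) / (x - z)).re ∂μ)) := by
  have hcoeff : -(2 * (Real.pi : ℂ))⁻¹ = ((-(2 * Real.pi)⁻¹ : ℝ) : ℂ) := by push_cast; ring
  have hre : ∫ x, ((x + z) / (x - z)).re ∂μ = (∫ x, (x + z) / (x - z) ∂μ).re := integral_re hF
  rw [sMu, norm_exp, hre, hcoeff, re_ofReal_mul, neg_mul]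

theorem norm_sMu_ofReal_mul_le_exp {μ : Measure ℂ} [IsFiniteMeasure μ] {ξ : ℂ} {ρ : ℝ}
    (hξ : ‖ξ‖ = 1) (hρ0 : 0 ≤ ρ) (hρ1 : ρ < 1) (hcirc : ∀ᵐ x ∂μ, ‖x‖ = 1)
    (hfar : ∀ᵐ x ∂μ, 1 - ρ ≤ ‖x - ξ‖) :
    ‖sMu μ (ρ * ξ)‖ ≤ Real.exp (-((1 - ρ) / 8 * ((Real.pi)⁻¹ * ∫ x, (‖x - ξ‖ ^ 2)⁻¹ ∂μ))) := by
  set z : ℂ := ρ * ξ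
  have hz : ‖z‖ = ρ := by rw [norm_mul, norm_real, Real.norm_of_nonneg hρ0, hξ, mul_one]
  have hρ : 0 < 1 - ρ := sub_pos.2 hρ1
  have hgap : ∀ᵐ x ∂μ, 1 - ρ ≤ ‖x - z‖ := hcirc.mono fun x hx => by
    linarith [hx ▸ hz ▸ norm_sub_norm_le x z]
  have hF : Integrable (fun x => (x + z) / (x - z)) μ := by
    have hmeas : Measurable fun x : ℂ => (x + z) / (x - z) := by fun_prop
    refine Integrable.of_bound hmeas.aestronglyMeasurable (2 / (1 - ρ)) ?_
    filter_upwards [hcirc, hgap] with x hx hxz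
    rw [norm_div]
    refine div_le_div₀ zero_le_two ((norm_add_le x z).trans ?_) hρ hxz
    linarith
  have hK : Integrable (fun x => (‖x - ξ‖ ^ 2)⁻¹) μ := by
    refine Integrable.of_bound (by fun_prop) ((1 - ρ) ^ 2)⁻¹ ?_
    filter_upwards [hfar] with x hx
    rw [Real.norm_of_nonneg (by positivity)]
    exact inv_anti₀ (by positivity) (pow_le_pow_left₀ hρ.le hx 2)
  have hpt : ∀ᵐ x ∂μ, (1 - ρ) / 8 * ((Real.pi)⁻¹ * (‖x - ξ‖ ^ 2)⁻¹)
      ≤ (2 * Real.pi)⁻¹ * ((x + z) / (x - z)).re := by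
    filter_upwards [hcirc, hfar, hgap] with x hx hxξ hxz
    have hk := radial_kernel_comparison hρ0 hρ1 hxξ (hρ.trans_le hxz)
      (norm_sub_ofReal_mul_le hξ hρ1.le)
    rw [re_add_div_sub, hx, hz, one_pow]
    calc (1 - ρ) / 8 * ((Real.pi)⁻¹ * (‖x - ξ‖ ^ 2)⁻¹)
        = (Real.pi)⁻¹ * ((1 - ρ) / 8 / ‖x - ξ‖ ^ 2) := by ring
      _ ≤ (Real.pi)⁻¹ * ((1 - ρ ^ 2) / ‖x - z‖ ^ 2 / 2) :=
          mul_le_mul_of_nonneg_left hk (inv_nonneg.2 Real.pi_pos.le)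
      _ = _ := by ring
  rw [norm_sMu hF, Real.exp_le_exp, neg_le_neg_iff]
  simp only [← integral_const_mul]
  exact integral_mono_ae ((hK.const_mul _).const_mul _) (hF.re.const_mul _) hpt

theorem inner_radial_decay_general {ι : Type}
    (ξ : ℂ) (hξ : ξ ∈ uCircle) (ρ : ℝ) (hρ0 : 0 < ρ) (hρ1 : ρ < 1)
    (a : ι → ℂ) (ha : ∀ n, a n ∈ oDisk)
    (hsum : Summable fun n => 1 - ‖a n‖)
    (hdist : ∀ n, 1 - ρ ≤ dist ξ (a n))
    (μ : Measure ℂ) (hμf : IsFiniteMeasure μ) (hμc : μ uCircleᶜ = 0)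
    (hμd : ∀ x ∈ mSupport μ, 1 - ρ ≤ dist ξ x) :
    (∏' n, ‖((ρ : ℂ) * ξ - a n) / (1 - (starRingEnd ℂ) (a n) * ((ρ : ℂ) * ξ))‖) *
        ‖sMu μ ((ρ : ℂ) * ξ)‖
      ≤ Real.exp (-((1 - ρ) / 8) * aU a μ ξ) := by
  have hξ1 : ‖ξ‖ = 1 := mem_sphere_zero_iff_norm.1 hξ
  have ha1 (n : ι) : ‖a n‖ < 1 := mem_ball_zero_iff.1 (ha n)
  have hfar (n : ι) : 1 - ρ ≤ ‖ξ - a n‖ := dist_eq_norm ξ (a n) ▸ hdist n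
  have hweights := summable_one_sub_norm_sq_div_norm_sub_sq (sub_pos.2 hρ1)
    (fun n => (ha1 n).le) hsum hfar
  have hprod := Real.tprod_le_exp_neg_tsum (fun n => norm_nonneg _)
    (fun n => norm_blaschke_ofReal_mul_le_exp (ha1 n) hξ1 hρ0.le hρ1 (hfar n))
    (fun n => mul_nonneg (by linarith) (div_nonneg (by nlinarith [ha1 n, norm_nonneg (a n)])
      (sq_nonneg _)))
    (hweights.mul_left _)
  have hcirc : ∀ᵐ x ∂μ, ‖x‖ = 1 := (measure_eq_zero_iff_ae_notMem.1 hμc).mono fun x hx =>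
    mem_sphere_zero_iff_norm.1 (not_not.1 hx)
  have hfarμ : ∀ᵐ x ∂μ, 1 - ρ ≤ ‖x - ξ‖ :=
    (ae_mem_mSupport μ).mono fun x hx => by simpa [dist_eq_norm, norm_sub_rev] using hμd x hx
  have hsing := norm_sMu_ofReal_mul_le_exp hξ1 hρ0.le hρ1 hcirc hfarμ
  calc _ ≤ _ * _ := mul_le_mul hprod hsing (norm_nonneg _) (Real.exp_pos _).le
    _ = Real.exp (-((1 - ρ) / 8) * aU a μ ξ) := by
      rw [← Real.exp_add, aU, tsum_mul_left]
      ring_nf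

/-- **Lemma B.2**: for `ξ ∈ 𝕋`, `0 < ρ < 1`, a Blaschke sequence `(a_n)` with
`1−ρ ≤ |ξ−a_n|` for all `n`, and a finite positive measure `μ` on `𝕋` with
`1−ρ ≤ d(ξ, supp μ)`, one has
`|U(ρξ)| = (∏ₙ |(ρξ−aₙ)/(1−conj(aₙ)·ρξ)|)·|S_μ(ρξ)| ≤ exp(−((1−ρ)/8)·a(ξ))`
with `a(ξ) = ∑ₙ (1−|aₙ|²)/|ξ−aₙ|² + (1/π)∫ |e^{iθ}−ξ|⁻² dμ(θ)`. -/
theorem inner_radial_decay {ι : Type} [Countable ι]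
    (ξ : ℂ) (hξ : ξ ∈ uCircle) (ρ : ℝ) (hρ0 : 0 < ρ) (hρ1 : ρ < 1)
    (a : ι → ℂ) (ha : ∀ n, a n ∈ oDisk)
    (hsum : Summable fun n => 1 - ‖a n‖)
    (hdist : ∀ n, 1 - ρ ≤ dist ξ (a n))
    (μ : Measure ℂ) (hμf : IsFiniteMeasure μ) (hμc : μ uCircleᶜ = 0)
    (hμd : ∀ x ∈ mSupport μ, 1 - ρ ≤ dist ξ x) :
    (∏' n, ‖((ρ : ℂ) * ξ - a n) / (1 - (starRingEnd ℂ) (a n) * ((ρ : ℂ) * ξ))‖) *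
        ‖sMu μ ((ρ : ℂ) * ξ)‖
      ≤ Real.exp (-((1 - ρ) / 8) * aU a μ ξ) :=
  inner_radial_decay_general ξ hξ ρ hρ0 hρ1 a ha hsum hdist μ hμf hμc hμd
end
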